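/- arXiv:2403.04513 — 7 statements merged into one kernel-verified Lean document; each statement's English description precedes it below -/
import Mathlib

section
/- Let (X,d) be a metric space, P a finite set of points, C ⊆ P, and ε ∈ (0,1]. Suppose there exists a point z ∈ X and p* ∈ C, p ∈ P with d(q,p) the furthest distance from q to P, such that: d(q,p*) = d(q,z) + d(z,p*) (z lies on a geodesic from q to p*), d(γ,p*) ≥ d(γ,p) for some point γ with d(z,γ) ≤ (ε/6)·diam(P), and d(q,p) ≥ diam(P)/2. Then d(q,p*) ≥ (1−ε)·d(q,p). -/
theorem coreset_cross_case
    {X : Type*} [MetricSpace X] (P C : Finset X) (hC : C ⊆ P)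
    (ε : ℝ) (hε : 0 < ε) (hε1 : ε ≤ 1)
    (q z γ : X) (p pstar : X) (hp : p ∈ P) (hpstar : pstar ∈ C)
    (hfn : ∀ r ∈ P, dist q r ≤ dist q p)
    (hgeo : dist q pstar = dist q z + dist z pstar)
    (hγ : dist γ pstar ≥ dist γ p)
    (hzγ : dist z γ ≤ (ε / 6) * Metric.diam (P : Set X))
    (hqp : dist q p ≥ Metric.diam (P : Set X) / 2) :
    dist q pstar ≥ (1 - ε) * dist q p := by
  have t1 : dist γ pstar ≤ dist γ z + dist z pstar := dist_triangle _ _ _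
  have t2 : dist z p ≤ dist z γ + dist γ p := dist_triangle _ _ _
  have t3 : dist q p ≤ dist q z + dist z p := dist_triangle _ _ _
  have e1 : dist γ z = dist z γ := dist_comm _ _
  nlinarith [dist_nonneg (x := q) (y := p), dist_nonneg (x := z) (y := γ)]
end

section
/- Let u, v, w be points in the Euclidean plane forming a triangle such that the interior angles at u and at w are each less than ε/2, for some ε ∈ (0,2]. Then ‖u−v‖ + ‖v−w‖ < (1 + ε/2)·‖u−w‖. -/
open RealInnerProductSpace
set_option maxHeartbeats 1000000


theorem thin_triangle_detour
    (u v w : EuclideanSpace ℝ (Fin 2)) (hcol : ¬ Collinear ℝ ({u, v, w} : Set (EuclideanSpace ℝ (Fin 2))))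
    (ε : ℝ) (hε : 0 < ε) (hε2 : ε ≤ 2)
    (hu : EuclideanGeometry.angle v u w < ε / 2)
    (hw : EuclideanGeometry.angle v w u < ε / 2) :
    ‖u - v‖ + ‖v - w‖ < (1 + ε / 2) * ‖u - w‖ := by
  have huv : u ≠ v := by
    rintro rfl
    exact hcol (by simpa using collinear_pair ℝ u w)
  have hvw : v ≠ w := by
    rintro rfl
    exact hcol (by simpa using collinear_pair ℝ u v)
  have huw : u ≠ w := by
    rintro rfl
    exact hcol (by simpa [Set.insert_comm, Set.pair_comm] using collinear_pair ℝ u v)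
  have hb : (0:ℝ) < ‖u - w‖ := by
    rw [norm_pos_iff]; exact sub_ne_zero_of_ne huw
  have ha : (0:ℝ) < ‖v - w‖ := by
    rw [norm_pos_iff]; exact sub_ne_zero_of_ne hvw
  have hc : (0:ℝ) < ‖u - v‖ := by
    rw [norm_pos_iff]; exact sub_ne_zero_of_ne huv
  set A := EuclideanGeometry.angle v u w with hA
  set C := EuclideanGeometry.angle v w u with hC
  have hAdef : A = InnerProductGeometry.angle (v - u) (w - u) := by
    rw [hA, EuclideanGeometry.angle, vsub_eq_sub, vsub_eq_sub]
  have hCdef : C = InnerProductGeometry.angle (v - w) (u - w) := by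
    rw [hC, EuclideanGeometry.angle, vsub_eq_sub, vsub_eq_sub]
  have h1 : Real.cos A * (‖v - u‖ * ‖w - u‖) = ⟪v - u, w - u⟫ := by
    rw [hAdef]; exact InnerProductGeometry.cos_angle_mul_norm_mul_norm _ _
  have h2 : Real.cos C * (‖v - w‖ * ‖u - w‖) = ⟪v - w, u - w⟫ := by
    rw [hCdef]; exact InnerProductGeometry.cos_angle_mul_norm_mul_norm _ _
  have hkey : ⟪v - u, w - u⟫ + ⟪v - w, u - w⟫ = ‖u - w‖ ^ 2 := by
    have : ⟪v - u, w - u⟫ + ⟪v - w, u - w⟫ = ⟪u - w, u - w⟫ := by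
      simp only [inner_sub_left, inner_sub_right]
      ring
    rw [this, real_inner_self_eq_norm_sq]
  have hnorm1 : ‖w - u‖ = ‖u - w‖ := norm_sub_rev _ _
  have hnorm2 : ‖v - u‖ = ‖u - v‖ := norm_sub_rev _ _
  -- projection identity
  have hproj : ‖u - w‖ = Real.cos A * ‖u - v‖ + Real.cos C * ‖v - w‖ := by
    have hsum : Real.cos A * (‖v - u‖ * ‖w - u‖) + Real.cos C * (‖v - w‖ * ‖u - w‖)
        = ‖u - w‖ ^ 2 := by rw [h1, h2]; exact hkey
    rw [hnorm1, hnorm2] at hsum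
    have h3 : (Real.cos A * ‖u - v‖ + Real.cos C * ‖v - w‖) * ‖u - w‖
        = ‖u - w‖ * ‖u - w‖ := by linear_combination hsum
    exact (mul_right_cancel₀ (ne_of_gt hb) h3).symm
  -- angle bounds
  have hA0 : 0 ≤ A := EuclideanGeometry.angle_nonneg _ _ _
  have hC0 : 0 ≤ C := EuclideanGeometry.angle_nonneg _ _ _
  have hεπ : ε / 2 ≤ Real.pi := by nlinarith [Real.pi_gt_three]
  have hcosA : Real.cos (ε / 2) < Real.cos A :=
    Real.cos_lt_cos_of_nonneg_of_le_pi hA0 hεπ hu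
  have hcosC : Real.cos (ε / 2) < Real.cos C :=
    Real.cos_lt_cos_of_nonneg_of_le_pi hC0 hεπ hw
  have hcospos : 0 < Real.cos (ε / 2) := by
    have := Real.one_sub_sq_div_two_le_cos (x := ε / 2)
    nlinarith
  have hbig : Real.cos (ε / 2) * (‖u - v‖ + ‖v - w‖) < ‖u - w‖ := by
    rw [hproj]; nlinarith
  -- (1 + x) cos x ≥ 1 for x = ε/2 ∈ (0,1]
  have hone : 1 ≤ (1 + ε / 2) * Real.cos (ε / 2) := by
    have := Real.one_sub_sq_div_two_le_cos (x := ε / 2)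
    nlinarith
  calc ‖u - v‖ + ‖v - w‖ < ‖u - w‖ / Real.cos (ε / 2) := by
        rw [lt_div_iff₀ hcospos]; nlinarith
    _ ≤ (1 + ε / 2) * ‖u - w‖ := by
        rw [div_le_iff₀ hcospos]; nlinarith
end

section
/- Let P be a finite set of n ≥ 1 points in a metric space of doubling dimension d, and let ε ∈ (0,1]. Then there exists a subset C ⊆ P of size O(1/ε^d) (with constant depending only on d) such that for every query point q in the space, max_{c∈C} d(q,c) ≥ (1−ε)·max_{p∈P} d(q,p). -/
open Metric Finset

lemma iter_cover {X : Type} [MetricSpace X] {d : ℕ}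
    (hdoub : ∀ (x : X) (r : ℝ), ∃ s : Finset X, s.card ≤ 2 ^ d ∧
      Metric.ball x r ⊆ ⋃ y ∈ s, Metric.ball y (r / 2)) (x : X) (r : ℝ) :
    ∀ k : ℕ, ∃ s : Finset X, s.card ≤ 2 ^ (d * k) ∧
      Metric.ball x r ⊆ ⋃ y ∈ s, Metric.ball y (r / 2 ^ k) := by
  intro k
  induction k with
  | zero =>
    refine ⟨{x}, by simp, ?_⟩
    simp
  | succ k ih =>
    obtain ⟨s, hcard, hcov⟩ := ih
    classical
    choose t ht1 ht2 using fun y => hdoub y (r / 2 ^ k)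
    refine ⟨s.biUnion t, ?_, ?_⟩
    · calc (s.biUnion t).card ≤ ∑ y ∈ s, (t y).card := Finset.card_biUnion_le
        _ ≤ ∑ _y ∈ s, 2 ^ d := Finset.sum_le_sum fun y _ => ht1 y
        _ = s.card * 2 ^ d := by rw [Finset.sum_const, smul_eq_mul]
        _ ≤ 2 ^ (d * k) * 2 ^ d := by gcongr
        _ = 2 ^ (d * (k + 1)) := by ring
    · intro z hz
      obtain ⟨y, hy, hzy⟩ := Set.mem_iUnion₂.1 (hcov hz)
      obtain ⟨w, hw, hzw⟩ := Set.mem_iUnion₂.1 (ht2 y hzy)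
      refine Set.mem_iUnion₂.2 ⟨w, Finset.mem_biUnion.2 ⟨y, hy, hw⟩, ?_⟩
      have : r / 2 ^ k / 2 = r / 2 ^ (k + 1) := by ring
      rwa [this] at hzw

theorem coreset_doubling_dimension (d : ℕ) :
    ∃ K : ℝ, 0 < K ∧
      ∀ (X : Type) (_ : MetricSpace X) (P : Finset X), P.Nonempty →
        (∀ (x : X) (r : ℝ), ∃ s : Finset X, s.card ≤ 2 ^ d ∧
            Metric.ball x r ⊆ ⋃ y ∈ s, Metric.ball y (r / 2)) →
        ∀ ε : ℝ, 0 < ε → ε ≤ 1 →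
          ∃ C : Finset X, C ⊆ P ∧ (C.card : ℝ) ≤ K * (1 / ε) ^ d ∧
            ∀ q : X, ∀ p ∈ P, ∃ c ∈ C, (1 - ε) * dist q p ≤ dist q c := by
  classical
  refine ⟨16 ^ d, by positivity, ?_⟩
  intro X _ P hP hdoub ε hε hε1
  obtain ⟨p0, hp0⟩ := hP
  have h1ε : (1 : ℝ) ≤ 1 / ε := by rw [le_div_iff₀ hε]; linarith
  have hKε : (1 : ℝ) ≤ 16 ^ d * (1 / ε) ^ d := by
    calc (1:ℝ) = 1 ^ d * 1 ^ d := by norm_num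
      _ ≤ 16 ^ d * (1 / ε) ^ d := by gcongr <;> norm_num
  set Δ : ℝ := Metric.diam (P : Set X) with hΔdef
  have hΔ0 : 0 ≤ Δ := Metric.diam_nonneg
  have hdistΔ : ∀ a ∈ P, ∀ b ∈ P, dist a b ≤ Δ := fun a ha b hb =>
    Metric.dist_le_diam_of_mem (P.finite_toSet.isBounded) ha hb
  by_cases hΔ : Δ = 0
  · refine ⟨{p0}, by simpa using hp0, by simpa using hKε, ?_⟩
    intro q p hp
    refine ⟨p0, Finset.mem_singleton_self p0, ?_⟩
    have h1 : dist q p ≤ dist q p0 + dist p0 p := dist_triangle _ _ _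
    have h2 : dist p0 p ≤ Δ := hdistΔ p0 hp0 p hp
    nlinarith [dist_nonneg (x := q) (y := p), dist_nonneg (x := q) (y := p0)]
  have hΔpos : 0 < Δ := lt_of_le_of_ne hΔ0 (Ne.symm hΔ)
  -- choose near-minimal k with 8/ε ≤ 2^k
  have hex : ∃ k : ℕ, 8 / ε ≤ (2:ℝ) ^ k := by
    obtain ⟨k, hk⟩ := pow_unbounded_of_one_lt (8 / ε) (by norm_num : (1:ℝ) < 2)
    exact ⟨k, hk.le⟩
  obtain ⟨k, hklow, hkhigh⟩ : ∃ k : ℕ, 8 / ε ≤ (2:ℝ) ^ k ∧ (2:ℝ) ^ k ≤ 16 / ε := by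
    refine ⟨Nat.find hex, Nat.find_spec hex, ?_⟩
    cases hN : Nat.find hex with
    | zero =>
      rw [pow_zero, le_div_iff₀ hε]; linarith
    | succ m =>
      have hmin := Nat.find_min hex (by rw [hN]; exact m.lt_succ_self)
      push_neg at hmin
      have : (2:ℝ) ^ (m + 1) = 2 * 2 ^ m := by ring
      rw [this]
      have h8 : (2:ℝ) ^ m < 8 / ε := hmin
      calc 2 * (2:ℝ) ^ m ≤ 2 * (8 / ε) := by linarith
        _ = 16 / ε := by ring
  have h2k : (0:ℝ) < 2 ^ k := by positivity
  have h8 : 8 ≤ ε * 2 ^ k := by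
    rw [div_le_iff₀ hε] at hklow; linarith
  obtain ⟨s, hscard, hscov⟩ := iter_cover hdoub p0 (2 * Δ) k
  set ρ : ℝ := 2 * Δ / 2 ^ k with hρdef
  have hρ : ρ ≤ ε * Δ / 4 := by
    rw [hρdef, div_le_div_iff₀ h2k (by norm_num : (0:ℝ) < 4)]
    nlinarith
  have hρ0 : 0 ≤ ρ := by positivity
  have hPb : ∀ p ∈ P, p ∈ Metric.ball p0 (2 * Δ) := by
    intro p hp
    have := hdistΔ p hp p0 hp0
    simp only [Metric.mem_ball]
    linarith
  -- representative map
  set g : X → X := fun y => if h : ∃ p ∈ P, p ∈ Metric.ball y ρ then h.choose else p0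
    with hgdef
  have hgP : ∀ y, g y ∈ P := by
    intro y
    simp only [hgdef]
    by_cases h : ∃ p ∈ P, p ∈ Metric.ball y ρ
    · rw [dif_pos h]; exact h.choose_spec.1
    · rw [dif_neg h]; exact hp0
  have hgnear : ∀ y, ∀ p ∈ P, p ∈ Metric.ball y ρ → dist p (g y) < 2 * ρ := by
    intro y p hp hpy
    have h : ∃ p ∈ P, p ∈ Metric.ball y ρ := ⟨p, hp, hpy⟩
    have hg : g y ∈ Metric.ball y ρ := by
      simp only [hgdef]
      rw [dif_pos h]; exact h.choose_spec.2
    rw [Metric.mem_ball] at hpy hg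
    calc dist p (g y) ≤ dist p y + dist y (g y) := dist_triangle _ _ _
      _ = dist p y + dist (g y) y := by rw [dist_comm y]
      _ < ρ + ρ := add_lt_add hpy hg
      _ = 2 * ρ := by ring
  refine ⟨s.image g, ?_, ?_, ?_⟩
  · intro c hc
    obtain ⟨y, _, rfl⟩ := Finset.mem_image.1 hc
    exact hgP y
  · calc ((s.image g).card : ℝ) ≤ (s.card : ℝ) := by
          exact_mod_cast Finset.card_image_le
      _ ≤ (2:ℝ) ^ (d * k) := by exact_mod_cast hscard
      _ = ((2:ℝ) ^ k) ^ d := by rw [← pow_mul, mul_comm]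
      _ ≤ (16 / ε) ^ d := by
          exact pow_le_pow_left₀ (by positivity) hkhigh d
      _ = 16 ^ d * (1 / ε) ^ d := by
          rw [div_pow, one_div, div_eq_mul_inv, inv_pow]
  · intro q p hp
    obtain ⟨pm, hpm, hpmax⟩ := Finset.exists_max_image P (fun a => dist q a) ⟨p0, hp0⟩
    obtain ⟨y, hy, hpy⟩ := Set.mem_iUnion₂.1 (hscov (hPb pm hpm))
    refine ⟨g y, Finset.mem_image.2 ⟨y, hy, rfl⟩, ?_⟩
    have hnear : dist pm (g y) < 2 * ρ := hgnear y pm hpm hpy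
    have hΔle : Δ ≤ 2 * dist q pm := by
      rw [hΔdef]
      apply Metric.diam_le_of_forall_dist_le (by positivity)
      intro a ha b hb
      calc dist a b ≤ dist a q + dist q b := dist_triangle _ _ _
        _ ≤ dist q pm + dist q pm := by
            rw [dist_comm a q]; exact add_le_add (hpmax a ha) (hpmax b hb)
        _ = 2 * dist q pm := by ring
    have hqc : dist q pm - 2 * ρ ≤ dist q (g y) := by
      have := dist_triangle q (g y) pm
      rw [dist_comm (g y) pm] at this
      linarith
    have hqp : dist q p ≤ dist q pm := hpmax p hp
    have hεd : 2 * ρ ≤ ε * dist q pm := by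
      calc 2 * ρ ≤ ε * Δ / 2 := by linarith
        _ ≤ ε * dist q pm := by nlinarith
    have h1 : (1 - ε) * dist q p ≤ (1 - ε) * dist q pm := by
      have : 0 ≤ 1 - ε := by linarith
      exact mul_le_mul_of_nonneg_left hqp this
    nlinarith
end

section
/- Let P be a finite set of points in ℝ^d and let C ⊆ P be an (ε/2)-kernel of P, i.e., for every unit vector u, max_{c∈C}⟨u,c⟩ − min_{c∈C}⟨u,c⟩ ≥ (1−ε/2)·(max_{p∈P}⟨u,p⟩ − min_{p∈P}⟨u,p⟩). Then C is an ε-coreset for furthest-neighbor queries: for every q ∈ ℝ^d, max_{c∈C} ‖q−c‖ ≥ (1−ε)·max_{p∈P} ‖q−p‖. -/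
theorem kernel_is_fn_coreset (d : ℕ)
    (P C : Finset (EuclideanSpace ℝ (Fin d))) (hCP : C ⊆ P)
    (hP : P.Nonempty) (hC : C.Nonempty)
    (ε : ℝ) (hε : 0 < ε) (hε1 : ε ≤ 1)
    (hkernel : ∀ u : EuclideanSpace ℝ (Fin d), ‖u‖ = 1 →
      C.sup' hC (fun c => (inner ℝ u c : ℝ)) - C.inf' hC (fun c => (inner ℝ u c : ℝ)) ≥
        (1 - ε / 2) *
          (P.sup' hP (fun p => (inner ℝ u p : ℝ)) - P.inf' hP (fun p => (inner ℝ u p : ℝ)))) :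
    ∀ q : EuclideanSpace ℝ (Fin d),
      C.sup' hC (fun c => ‖q - c‖) ≥ (1 - ε) * P.sup' hP (fun p => ‖q - p‖) := by
  intro q
  obtain ⟨p₀, hp₀P, hp₀⟩ := Finset.exists_mem_eq_sup' hP (fun p => ‖q - p‖)
  rw [hp₀]
  have hrP : ∀ p ∈ P, ‖q - p‖ ≤ ‖q - p₀‖ := by
    intro p hp
    rw [← hp₀]
    exact Finset.le_sup' (fun p => ‖q - p‖) hp
  have hC' := hC
  obtain ⟨c₀, hc₀⟩ := hC'
  rcases eq_or_lt_of_le (norm_nonneg (q - p₀)) with h0 | hrpos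
  · have h1 : (1 - ε) * ‖q - p₀‖ = 0 := by rw [← h0]; ring
    rw [h1]
    calc (0 : ℝ) ≤ ‖q - c₀‖ := norm_nonneg _
    _ ≤ _ := Finset.le_sup' (fun c => ‖q - c‖) hc₀
  · have hne : p₀ - q ≠ 0 := by
      intro h
      rw [← neg_sub q p₀, neg_eq_zero] at h
      rw [h, norm_zero] at hrpos
      exact lt_irrefl _ hrpos
    set u : EuclideanSpace ℝ (Fin d) := ‖p₀ - q‖⁻¹ • (p₀ - q) with hu
    have hu1 : ‖u‖ = 1 := norm_smul_inv_norm hne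
    have hnpq : ‖p₀ - q‖ = ‖q - p₀‖ := norm_sub_rev _ _
    have hk := hkernel u hu1
    set g : EuclideanSpace ℝ (Fin d) → ℝ := fun p => (inner ℝ u p : ℝ) with hg
    have hCS : ∀ x : EuclideanSpace ℝ (Fin d), g x - g q ≤ ‖q - x‖ := by
      intro x
      have h1 : (inner ℝ u (x - q) : ℝ) ≤ ‖u‖ * ‖x - q‖ := real_inner_le_norm u (x - q)
      rw [inner_sub_right] at h1
      rw [hu1, one_mul, norm_sub_rev] at h1
      exact h1
    have hCS' : ∀ x : EuclideanSpace ℝ (Fin d), g q - g x ≤ ‖q - x‖ := by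
      intro x
      have h1 : (inner ℝ u (q - x) : ℝ) ≤ ‖u‖ * ‖q - x‖ := real_inner_le_norm u (q - x)
      rw [inner_sub_right] at h1
      rw [hu1, one_mul] at h1
      exact h1
    have hgp₀ : g p₀ - g q = ‖q - p₀‖ := by
      have h2 : g p₀ - g q = (inner ℝ u (p₀ - q) : ℝ) := by rw [hg]; simp [inner_sub_right]
      rw [h2, hu, real_inner_smul_left, real_inner_self_eq_norm_sq, hnpq]
      field_simp
    have hsP_le : P.sup' hP g ≤ g q + ‖q - p₀‖ := by
      apply Finset.sup'_le
      intro p hp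
      have h3 := hCS p
      have h4 := hrP p hp
      linarith
    have hiP_ge : g q - ‖q - p₀‖ ≤ P.inf' hP g := by
      apply Finset.le_inf'
      intro p hp
      have h3 := hCS' p
      have h4 := hrP p hp
      linarith
    have hsP_ge : g q + ‖q - p₀‖ ≤ P.sup' hP g := by
      have h5 := Finset.le_sup' g hp₀P
      linarith
    have hiC : P.inf' hP g ≤ C.inf' hC g := by
      apply Finset.le_inf'
      intro c hc
      exact Finset.inf'_le g (hCP hc)
    obtain ⟨c, hcC, hcs⟩ := Finset.exists_mem_eq_sup' hC g
    have hgc : g q + (1 - ε) * ‖q - p₀‖ ≤ g c := by nlinarith [hrpos]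
    have hnc : (1 - ε) * ‖q - p₀‖ ≤ ‖q - c‖ := by
      have h6 := hCS c
      linarith
    calc (1 - ε) * ‖q - p₀‖ ≤ ‖q - c‖ := hnc
    _ ≤ _ := Finset.le_sup' (fun c => ‖q - c‖) hcC
end

section
/- Let P be a finite set in ℝ^d, and let B(c,r) be the smallest enclosing ball of P. Let C ⊆ P be a subset with P ⊆ B(c',r') where B(c',r') is also the smallest enclosing ball of C and equals B(c,r) (i.e., C determines the same smallest enclosing ball). Then for every q ∈ ℝ^d, max_{p∈C} ‖q−p‖ ≥ (1/√2)·max_{p∈P} ‖q−p‖. -/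
/-- `IsSmallestEnclosingBall P c r` means the closed ball of center `c` and
radius `r` contains `P` and has minimal radius among all closed balls containing `P`. -/
def IsSmallestEnclosingBall {d : ℕ} (P : Set (EuclideanSpace ℝ (Fin d)))
    (c : EuclideanSpace ℝ (Fin d)) (r : ℝ) : Prop :=
  P ⊆ Metric.closedBall c r ∧
    ∀ (c' : EuclideanSpace ℝ (Fin d)) (r' : ℝ), P ⊆ Metric.closedBall c' r' → r ≤ r'

lemma exists_far {d : ℕ} (C : Finset (EuclideanSpace ℝ (Fin d)))
    (c q : EuclideanSpace ℝ (Fin d)) (r : ℝ)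
    (hC : IsSmallestEnclosingBall (C : Set (EuclideanSpace ℝ (Fin d))) c r) :
    ∃ p ∈ C, r ^ 2 + dist q c ^ 2 ≤ dist q p ^ 2 := by
  rcases C.eq_empty_or_nonempty with hE | hne
  · exfalso
    have := hC.2 c (r - 1) (by simp [hE])
    linarith
  obtain ⟨p0, hp0⟩ := hne
  have hr0 : 0 ≤ r := le_trans dist_nonneg (hC.1 hp0)
  by_contra h
  push_neg at h
  -- ε : positive margin
  set D : ℝ := dist q c with hD
  obtain ⟨pm, hpm, hpmin⟩ := C.exists_min_image (fun p => r ^ 2 + D ^ 2 - dist q p ^ 2) ⟨p0, hp0⟩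
  set ε : ℝ := r ^ 2 + D ^ 2 - dist q pm ^ 2 with hε
  have hεpos : 0 < ε := by have := h pm hpm; simp [hε]; linarith
  have hεle : ∀ p ∈ C, dist q p ^ 2 ≤ r ^ 2 + D ^ 2 - ε := fun p hp => by
    have := hpmin p hp; linarith
  set t : ℝ := min 1 (ε / (2 * (D ^ 2 + 1))) with ht
  have htpos : 0 < t := lt_min one_pos (by positivity)
  have ht1 : t ≤ 1 := min_le_left _ _
  have htD : t * D ^ 2 ≤ ε / 2 := by
    have h1 : t ≤ ε / (2 * (D ^ 2 + 1)) := min_le_right _ _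
    have h2 : t * D ^ 2 ≤ (ε / (2 * (D ^ 2 + 1))) * D ^ 2 := by
      apply mul_le_mul_of_nonneg_right h1 (by positivity)
    have h3 : (ε / (2 * (D ^ 2 + 1))) * D ^ 2 ≤ ε / 2 := by
      rw [div_mul_eq_mul_div, div_le_div_iff₀ (by positivity) (by norm_num)]
      nlinarith [sq_nonneg D]
    linarith
  set c' : EuclideanSpace ℝ (Fin d) := c + t • (q - c) with hc'
  set X : ℝ := r ^ 2 - t * ε + t ^ 2 * D ^ 2 with hX
  have hdist : ∀ p ∈ C, dist p c' ^ 2 ≤ X := by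
    intro p hp
    have hpa : dist p c ≤ r := hC.1 hp
    have key : dist p c' ^ 2 = dist p c ^ 2 +
        t * (dist q p ^ 2 - D ^ 2 - dist p c ^ 2) + t ^ 2 * D ^ 2 := by
      have e1 : p - c' = (p - c) - t • (q - c) := by
        simp [hc']; abel
      have e2 : q - p = (q - c) - (p - c) := by abel
      rw [dist_eq_norm, e1]
      rw [show dist q p = ‖q - p‖ from dist_eq_norm q p, e2]
      rw [show dist p c = ‖p - c‖ from dist_eq_norm p c]
      rw [show D = ‖q - c‖ from by rw [hD, dist_eq_norm]]
      set a := p - c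
      set u := q - c
      have expand1 : ‖a - t • u‖ ^ 2 = ‖a‖ ^ 2 - 2 * (t * (inner ℝ a u : ℝ)) + t ^ 2 * ‖u‖ ^ 2 := by
        rw [norm_sub_sq_real, inner_smul_right, norm_smul, mul_pow, Real.norm_eq_abs, sq_abs]
      have expand2 : ‖u - a‖ ^ 2 = ‖u‖ ^ 2 - 2 * (inner ℝ u a : ℝ) + ‖a‖ ^ 2 := norm_sub_sq_real u a
      rw [expand1, expand2, real_inner_comm u a]
      ring
    have h1 : dist q p ^ 2 ≤ r ^ 2 + D ^ 2 - ε := hεle p hp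
    have h2 : dist p c ^ 2 ≤ r ^ 2 := by nlinarith [dist_nonneg (x := p) (y := c)]
    rw [key, hX]
    nlinarith [htpos.le, sq_nonneg (dist p c)]
  have hX0 : 0 ≤ X := le_trans (sq_nonneg _) (hdist p0 hp0)
  have hsub : (C : Set (EuclideanSpace ℝ (Fin d))) ⊆ Metric.closedBall c' (Real.sqrt X) := by
    intro p hp
    simp only [Metric.mem_closedBall]
    have := hdist p hp
    nlinarith [Real.sq_sqrt hX0, Real.sqrt_nonneg X, dist_nonneg (x := p) (y := c')]
  have hrle := hC.2 c' (Real.sqrt X) hsub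
  have : r ^ 2 ≤ X := by nlinarith [Real.sq_sqrt hX0]
  nlinarith [htpos, htD, hεpos]

theorem seb_coreset_sqrt_two (d : ℕ)
    (P C : Finset (EuclideanSpace ℝ (Fin d))) (hCP : C ⊆ P)
    (c : EuclideanSpace ℝ (Fin d)) (r : ℝ)
    (hP : IsSmallestEnclosingBall (P : Set (EuclideanSpace ℝ (Fin d))) c r)
    (hC : IsSmallestEnclosingBall (C : Set (EuclideanSpace ℝ (Fin d))) c r) :
    ∀ q : EuclideanSpace ℝ (Fin d), ∀ p ∈ P, ∃ p' ∈ C,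
      dist q p' ≥ (1 / Real.sqrt 2) * dist q p := by
  intro q p hp
  obtain ⟨p', hp', hfar⟩ := exists_far C c q r hC
  refine ⟨p', hp', ?_⟩
  have hr0 : 0 ≤ r := le_trans dist_nonneg (hP.1 hp)
  have hpc : dist p c ≤ r := Metric.mem_closedBall.mp (hP.1 hp)
  have htri : dist q p ≤ dist q c + r := by
    calc dist q p ≤ dist q c + dist c p := dist_triangle q c p
    _ ≤ dist q c + r := by rw [dist_comm c p]; linarith
  have hsq : dist q p ^ 2 ≤ 2 * dist q p' ^ 2 := by
    nlinarith [dist_nonneg (x := q) (y := c), sq_nonneg (dist q c - r), dist_nonneg (x := q) (y := p)]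
  have hle : dist q p ≤ Real.sqrt 2 * dist q p' := by
    nlinarith [Real.sq_sqrt (by norm_num : (2:ℝ) ≥ 0), Real.sqrt_nonneg 2,
      dist_nonneg (x := q) (y := p'), dist_nonneg (x := q) (y := p),
      mul_nonneg (Real.sqrt_nonneg 2) (dist_nonneg (x := q) (y := p'))]
  have hs2 : (0:ℝ) < Real.sqrt 2 := Real.sqrt_pos.mpr (by norm_num)
  rw [ge_iff_le, one_div, inv_mul_le_iff₀ hs2]
  exact hle
end

section
/- Let u, v, w ∈ ℝ² with u ≠ w, and suppose the unit directions of v−u and of w−v both lie in a closed circular arc of angular width at most ε/2 on S¹, for ε ∈ (0,2]. Then ‖v−u‖ + ‖w−v‖ ≤ (1 + ε/2)·‖w−u‖ provided the angle between uv and uw and the angle between wv and wu are each at most ε/2. More precisely: if the unit vectors (v−u)/‖v−u‖ and (w−v)/‖w−v‖ make an angle at most ε/2 with each other, then ‖v−u‖ + ‖w−v‖ ≤ ‖w−u‖ / cos(ε/4) ≤ (1+ε/2)·‖w−u‖ for ε ∈ (0,2]. -/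
theorem aux_cos_bound (ε : ℝ) (hε : 0 < ε) (hε2 : ε ≤ 2) :
    1 ≤ (1 + ε / 2) * Real.cos (ε / 4) := by
  have hc := Real.one_sub_sq_div_two_le_cos (x := ε / 4)
  have hstep : (1 + ε / 2) * (1 - (ε / 4) ^ 2 / 2) ≤ (1 + ε / 2) * Real.cos (ε / 4) :=
    mul_le_mul_of_nonneg_left hc (by linarith)
  nlinarith [hstep, mul_pos hε hε, mul_pos (mul_pos hε hε) hε,
    mul_nonneg (mul_nonneg hε.le hε.le) (by linarith : (0:ℝ) ≤ 2 - ε)]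

theorem almost_parallel_detour
    (u v w : EuclideanSpace ℝ (Fin 2)) (huv : v ≠ u) (hvw : w ≠ v) (huw : u ≠ w)
    (ε : ℝ) (hε : 0 < ε) (hε2 : ε ≤ 2)
    (hangle : InnerProductGeometry.angle (v - u) (w - v) ≤ ε / 2) :
    ‖v - u‖ + ‖w - v‖ ≤ ‖w - u‖ / Real.cos (ε / 4) ∧
      ‖w - u‖ / Real.cos (ε / 4) ≤ (1 + ε / 2) * ‖w - u‖ := by
  have hpi := Real.pi_gt_three
  have hcpos : 0 < Real.cos (ε / 4) := by
    apply Real.cos_pos_of_mem_Ioo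
    constructor <;> nlinarith
  have hcle : Real.cos (ε / 4) ≤ 1 := Real.cos_le_one _
  set a := v - u with ha
  set b := w - v with hb
  have hab : w - u = b + a := by simp [ha, hb]
  clear_value a b
  have hna : 0 < ‖a‖ := by
    rw [ha]; simpa using norm_pos_iff.mpr (sub_ne_zero.mpr huv)
  have hnb : 0 < ‖b‖ := by
    rw [hb]; simpa using norm_pos_iff.mpr (sub_ne_zero.mpr hvw)
  have hcoscos : Real.cos (ε / 2) ≤ Real.cos (InnerProductGeometry.angle a b) :=
    Real.cos_le_cos_of_nonneg_of_le_pi (InnerProductGeometry.angle_nonneg a b)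
      (by nlinarith) hangle
  have hinner : Real.cos (InnerProductGeometry.angle a b) * (‖a‖ * ‖b‖)
      = (inner ℝ a b : ℝ) := InnerProductGeometry.cos_angle_mul_norm_mul_norm a b
  have hinner' : Real.cos (ε / 2) * (‖a‖ * ‖b‖) ≤ (inner ℝ a b : ℝ) := by
    rw [← hinner]
    have := mul_pos hna hnb
    nlinarith
  have hcos2 : Real.cos (ε / 2) = 2 * Real.cos (ε / 4) ^ 2 - 1 := by
    have : ε / 2 = 2 * (ε / 4) := by ring
    rw [this, Real.cos_two_mul]
  have hsq : ‖b + a‖ ^ 2 = ‖a‖ ^ 2 + 2 * (inner ℝ a b : ℝ) + ‖b‖ ^ 2 := by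
    rw [add_comm b a]
    exact norm_add_sq_real a b
  have key : (‖a‖ + ‖b‖) * Real.cos (ε / 4) ≤ ‖b + a‖ := by
    have h1 : ((‖a‖ + ‖b‖) * Real.cos (ε / 4)) ^ 2 ≤ ‖b + a‖ ^ 2 := by
      rw [hsq]
      have h3 : 0 ≤ (1 - Real.cos (ε / 4) ^ 2) * (‖a‖ - ‖b‖) ^ 2 :=
        mul_nonneg (by nlinarith) (sq_nonneg _)
      nlinarith [mul_pos hna hnb, hinner', hcos2, h3]
    have h2 : 0 ≤ (‖a‖ + ‖b‖) * Real.cos (ε / 4) := by positivity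
    nlinarith [norm_nonneg (b + a)]
  constructor
  · rw [hab, le_div_iff₀ hcpos]
    linarith [key]
  · rw [hab, div_le_iff₀ hcpos]
    have hbound := aux_cos_bound ε hε hε2
    calc ‖b + a‖ = ‖b + a‖ * 1 := by ring
      _ ≤ ‖b + a‖ * ((1 + ε / 2) * Real.cos (ε / 4)) :=
          mul_le_mul_of_nonneg_left hbound (norm_nonneg _)
      _ = (1 + ε / 2) * ‖b + a‖ * Real.cos (ε / 4) := by ring
end

section
/- Let P be a finite set of points inside a convex region (or generally, suppose geodesic distance equals Euclidean distance), let D = diam(P), and let B be a covering of P by balls of radius (ε/2)·(D/2) each containing at least one point of P, with C consisting of one point of P from each nonempty ball. Then for any query point q, max_{c∈C} d(q,c) ≥ (1−ε)·max_{p∈P} d(q,p). -/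
theorem ball_covering_coreset
    {X : Type*} [MetricSpace X] (P C : Finset X) (hCP : C ⊆ P)
    (D ε : ℝ) (hε : 0 < ε) (hε1 : ε ≤ 1)
    (p1 p2 : X) (hp1 : p1 ∈ P) (hp2 : p2 ∈ P) (hach : dist p1 p2 = D)
    (hdiam : ∀ a ∈ P, ∀ b ∈ P, dist a b ≤ D)
    (centers : Finset X)
    (hcover : ∀ p ∈ P, ∃ b ∈ centers, dist p b ≤ ε * D / 4)
    (hrep : ∀ b ∈ centers, (∃ p ∈ P, dist p b ≤ ε * D / 4) →
      ∃ c ∈ C, dist c b ≤ ε * D / 4) :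
    ∀ q : X, ∀ p ∈ P, ∃ c ∈ C, dist q c ≥ (1 - ε) * dist q p := by
  intro q p hp
  have key : ∀ r ∈ P, ∃ c ∈ C, dist q c ≥ dist q r - ε * D / 2 := by
    intro r hr
    obtain ⟨b, hb, hrb⟩ := hcover r hr
    obtain ⟨c, hc, hcb⟩ := hrep b hb ⟨r, hr, hrb⟩
    refine ⟨c, hc, ?_⟩
    have h1 : dist c r ≤ ε * D / 2 := by
      calc dist c r ≤ dist c b + dist r b := dist_triangle_right c r b
        _ ≤ ε * D / 4 + ε * D / 4 := add_le_add hcb hrb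
        _ = ε * D / 2 := by ring
    linarith [dist_triangle q c r, dist_comm c r ▸ dist_triangle q c r]
  by_cases h : D / 2 ≤ dist q p
  · obtain ⟨c, hc, hgc⟩ := key p hp
    exact ⟨c, hc, by nlinarith [dist_nonneg (x := q) (y := p)]⟩
  · push_neg at h
    have htri : D ≤ dist q p1 + dist q p2 := by
      have := dist_triangle p1 q p2
      rw [dist_comm p1 q] at this
      linarith [hach ▸ this]
    by_cases h1 : D / 2 ≤ dist q p1
    · obtain ⟨c, hc, hgc⟩ := key p1 hp1
      refine ⟨c, hc, ?_⟩
      nlinarith [dist_nonneg (x := q) (y := p)]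
    · have h2 : D / 2 ≤ dist q p2 := by linarith
      obtain ⟨c, hc, hgc⟩ := key p2 hp2
      refine ⟨c, hc, ?_⟩
      nlinarith [dist_nonneg (x := q) (y := p)]
end
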